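/- As h → 0 in ℂ, the function H_d satisfies ((1+d)³/(1+2d)²)·|h|² + o(|h|²) ≤ H_d(γ_d + h) ≤ ((1+d)³/(1+2d))·|h|² + o(|h|²), where γ_d = -d/(1+d) and d ≥ 0. -/

import Mathlib

open Asymptotics Filter

/-- `H_d(0) = (1+2d)·log(1+2d) - 2(1+d)·log(1+d)`. -/
noncomputable def Hd0 (d : ℝ) : ℝ :=
  (1 + 2 * d) * Real.log (1 + 2 * d) - 2 * (1 + d) * Real.log (1 + d)

/-- `H_d(γ) = -log(1-|γ|²) - 2d·log|1-γ| + H_d(0)`. -/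
noncomputable def Hd (d : ℝ) (γ : ℂ) : ℝ :=
  -Real.log (1 - ‖γ‖ ^ 2) - 2 * d * Real.log (‖1 - γ‖) + Hd0 d

/-! At a real point `c` of the disc, both `1 - ‖c + h‖²` and `‖1 - (c + h)‖²` have the form
`a + v h + w h` with `v` linear and `w` quadratic in `h`, so `log (1 + x) = x - x²/2 + O(x³)`
gives the second-order expansion of `H_d (c + h)`. At `c = γ_d` the value and the linear term
vanish, and the quadratic term is `c₂ ‖h‖² + (c₁ - c₂) (re h)²` with
`c₁ = (1+d)³/(1+2d) ≥ c₂ = (1+d)³/(1+2d)²`, which lies between `c₂ ‖h‖²` and `c₁ ‖h‖²`. -/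

open Real Topology

theorem isBigO_log_one_add_sub_taylor :
    (fun x : ℝ => log (1 + x) - (x - x ^ 2 / 2)) =O[𝓝 0] fun x => x ^ 3 := by
  refine isBigO_iff.2 ⟨2, ?_⟩
  filter_upwards [Metric.ball_mem_nhds (0 : ℝ) one_half_pos] with x hx
  have hx : |x| < 1 / 2 := by simpa using hx
  have key := abs_log_sub_add_sum_range_le (x := -x) (by rw [abs_neg]; linarith) 2
  simp only [Finset.sum_range_succ, Finset.sum_range_zero, abs_neg, sub_neg_eq_add] at key
  norm_num at key
  calc ‖log (1 + x) - (x - x ^ 2 / 2)‖ = |-x + x ^ 2 / 2 + log (1 + x)| := by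
        rw [Real.norm_eq_abs]; ring_nf
    _ ≤ |x| ^ 3 / (1 - |x|) := key
    _ ≤ 2 * ‖x ^ 3‖ := by
        rw [div_le_iff₀ (by linarith), norm_pow, Real.norm_eq_abs]
        nlinarith [pow_nonneg (abs_nonneg x) 3]

section

variable {E : Type*} [SeminormedAddCommGroup E]

theorem isLittleO_log_one_add_sub_taylor {u : E → ℝ} (hu : u =O[𝓝 0] (‖·‖)) :
    (fun h => log (1 + u h) - (u h - u h ^ 2 / 2)) =o[𝓝 0] fun h => ‖h‖ ^ 2 :=
  (isBigO_log_one_add_sub_taylor.comp_tendsto (hu.trans_tendsto tendsto_norm_zero)).trans_isLittleO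
    ((hu.pow 3).trans_isLittleO (isLittleO_norm_pow_norm_pow (by norm_num)))

theorem isLittleO_log_add_add_sub_taylor {a : ℝ} (ha : 0 < a) {v w : E → ℝ}
    (hv : v =O[𝓝 0] (‖·‖)) (hw : w =O[𝓝 0] fun h => ‖h‖ ^ 2) :
    (fun h => log (a + v h + w h) - (log a + (v h + w h) / a - v h ^ 2 / (2 * a ^ 2)))
      =o[𝓝 0] fun h => ‖h‖ ^ 2 := by
  have hw₁ : w =O[𝓝 0] (‖·‖) :=
    hw.trans (by simpa using (isLittleO_norm_pow_norm_pow (E' := E) one_lt_two).isBigO)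
  have hu : (fun h => (v h + w h) / a) =O[𝓝 0] (‖·‖) := by
    simpa only [div_eq_inv_mul] using (hv.add hw₁).const_mul_left a⁻¹
  have hcross : (fun h => w h * (2 * v h + w h)) =o[𝓝 0] fun h => ‖h‖ ^ 2 := by
    refine (hw.mul ((hv.const_mul_left 2).add hw₁)).trans_isLittleO ?_
    simpa only [← pow_succ] using isLittleO_norm_pow_norm_pow (E' := E) (by norm_num : 2 < 3)
  refine ((isLittleO_log_one_add_sub_taylor hu).sub
    (hcross.const_mul_left (1 / (2 * a ^ 2)))).congr' ?_ EventuallyEq.rfl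
  filter_upwards [(hu.trans_tendsto tendsto_norm_zero).eventually (lt_mem_nhds neg_one_lt_zero)]
    with h hh
  have hsplit : a + v h + w h = a * (1 + (v h + w h) / a) := by field_simp; ring
  rw [hsplit, log_mul ha.ne' (by linarith)]
  field_simp
  ring

end

theorem Hd_ofReal_add (d c : ℝ) (h : ℂ) :
    Hd d (c + h) = -log ((1 - c ^ 2) + -2 * c * h.re + -‖h‖ ^ 2)
      - d * log ((1 - c) ^ 2 + -2 * (1 - c) * h.re + ‖h‖ ^ 2) + Hd0 d := by
  have hnorm : ∀ z : ℂ, ‖z‖ ^ 2 = z.re ^ 2 + z.im ^ 2 := fun z => by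
    rw [Complex.sq_norm, Complex.normSq_apply]; ring
  have hdisc : 1 - ‖(c : ℂ) + h‖ ^ 2 = (1 - c ^ 2) + -2 * c * h.re + -‖h‖ ^ 2 := by
    rw [hnorm, hnorm h]
    simp only [Complex.add_re, Complex.add_im, Complex.ofReal_re, Complex.ofReal_im]
    ring
  have hdist : ‖1 - ((c : ℂ) + h)‖ ^ 2 = (1 - c) ^ 2 + -2 * (1 - c) * h.re + ‖h‖ ^ 2 := by
    rw [hnorm, hnorm h]
    simp only [Complex.add_re, Complex.add_im, Complex.sub_re, Complex.sub_im, Complex.one_re,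
      Complex.one_im, Complex.ofReal_re, Complex.ofReal_im]
    ring
  rw [Hd, ← hdisc, ← hdist, log_pow]
  push_cast
  ring

theorem Hd_ofReal (d c : ℝ) :
    Hd d c = -log (1 - c ^ 2) - d * log ((1 - c) ^ 2) + Hd0 d := by
  simpa using Hd_ofReal_add d c 0

theorem Hd_ofReal_add_sub_taylor (d : ℝ) {c : ℝ} (hc : |c| < 1) :
    (fun h : ℂ => Hd d (c + h) - (Hd d c + 2 * (c / (1 - c ^ 2) + d / (1 - c)) * h.re
      + (1 / (1 - c ^ 2) - d / (1 - c) ^ 2) * ‖h‖ ^ 2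
      + 2 * (c ^ 2 / (1 - c ^ 2) ^ 2 + d / (1 - c) ^ 2) * h.re ^ 2))
      =o[𝓝 0] fun h => ‖h‖ ^ 2 := by
  have h₁ : 0 < 1 - c ^ 2 := by rw [sub_pos, sq_lt_one_iff_abs_lt_one]; exact hc
  have h₃ : 1 - c ≠ 0 := by linarith [(abs_lt.1 hc).2]
  have h₂ : 0 < (1 - c) ^ 2 := by positivity
  have hre : (fun h : ℂ => h.re) =O[𝓝 0] (‖·‖) :=
    isBigO_of_le _ fun h => by simpa using Complex.abs_re_le_norm h
  have e₁ := isLittleO_log_add_add_sub_taylor h₁ (hre.const_mul_left (-2 * c))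
    (isBigO_refl (fun h : ℂ => ‖h‖ ^ 2) _).neg_left
  have e₂ := isLittleO_log_add_add_sub_taylor h₂ (hre.const_mul_left (-2 * (1 - c)))
    (isBigO_refl (fun h : ℂ => ‖h‖ ^ 2) _)
  refine (e₁.neg_left.sub (e₂.const_mul_left d)).congr (fun h => ?_) fun _ => rfl
  rw [Hd_ofReal_add, Hd_ofReal]
  field_simp
  ring

theorem one_sub_neg_div_one_add {d : ℝ} (hd : 1 + d ≠ 0) :
    1 - -(d / (1 + d)) = (1 + 2 * d) / (1 + d) := by
  field_simp; ring

theorem one_sub_sq_neg_div_one_add {d : ℝ} (hd : 1 + d ≠ 0) :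
    1 - (-(d / (1 + d))) ^ 2 = (1 + 2 * d) / (1 + d) ^ 2 := by
  field_simp; ring

theorem Hd_neg_div_one_add {d : ℝ} (hd : 0 < 1 + 2 * d) : Hd d (-(d / (1 + d)) : ℝ) = 0 := by
  have hd₁ : 0 < 1 + d := by linarith
  rw [Hd_ofReal, one_sub_sq_neg_div_one_add hd₁.ne', one_sub_neg_div_one_add hd₁.ne', Hd0,
    div_pow, log_div (by positivity) (by positivity), log_div (by positivity) (by positivity)]
  simp only [log_pow]
  push_cast
  ring

theorem Hd_quadratic_expansion (d : ℝ) (hd : 0 ≤ d) :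
    ∃ e₁ e₂ : ℂ → ℝ,
      (e₁ =o[nhds (0 : ℂ)] fun h => ‖h‖ ^ 2) ∧
      (e₂ =o[nhds (0 : ℂ)] fun h => ‖h‖ ^ 2) ∧
      (∀ᶠ h in nhds (0 : ℂ),
        (1 + d) ^ 3 / (1 + 2 * d) ^ 2 * ‖h‖ ^ 2 + e₁ h
            ≤ Hd d (((-(d / (1 + d)) : ℝ) : ℂ) + h) ∧
        Hd d (((-(d / (1 + d)) : ℝ) : ℂ) + h)
            ≤ (1 + d) ^ 3 / (1 + 2 * d) * ‖h‖ ^ 2 + e₂ h) := by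
  have hd₁ : 0 < 1 + d := by linarith
  have hd₂ : 0 < 1 + 2 * d := by linarith
  have hγ : |-(d / (1 + d))| < 1 := by
    rw [abs_neg, abs_of_nonneg (by positivity), div_lt_one hd₁]; linarith
  have hE : (fun h : ℂ => Hd d (((-(d / (1 + d)) : ℝ) : ℂ) + h)
      - ((1 + d) ^ 3 / (1 + 2 * d) ^ 2 * ‖h‖ ^ 2
        + ((1 + d) ^ 3 / (1 + 2 * d) - (1 + d) ^ 3 / (1 + 2 * d) ^ 2) * h.re ^ 2))
      =o[𝓝 0] fun h => ‖h‖ ^ 2 := by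
    refine (Hd_ofReal_add_sub_taylor d hγ).congr_left fun h => ?_
    rw [Hd_neg_div_one_add hd₂, one_sub_sq_neg_div_one_add hd₁.ne',
      one_sub_neg_div_one_add hd₁.ne']
    field_simp
    ring
  have hc : (1 + d) ^ 3 / (1 + 2 * d) ^ 2 ≤ (1 + d) ^ 3 / (1 + 2 * d) :=
    div_le_div_of_nonneg_left (by positivity) hd₂ (le_self_pow₀ (by linarith) two_ne_zero)
  refine ⟨_, _, hE, hE, Eventually.of_forall fun h => ⟨?_, ?_⟩⟩
  · have := mul_nonneg (sub_nonneg.2 hc) (sq_nonneg h.re)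
    linarith
  · have hre : h.re ^ 2 ≤ ‖h‖ ^ 2 := by
      rw [Complex.sq_norm, sq]; exact Complex.re_sq_le_normSq h
    have := mul_le_mul_of_nonneg_left hre (sub_nonneg.2 hc)
    linarith
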